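/- arXiv:1801.03602 — 2 statements merged into one kernel-verified Lean document; each statement's English description precedes it below -/
import Mathlib

section
/- Let 1 ≤ k_1 < ... < k_s and n be positive integers, p a prime, q = p^r, F_q = {0, α_1, ..., α_{q−1}} the Galois field of q elements, and β_1, ..., β_s ∈ F_q^×. Then S_{F_q}(Σ_{j=1}^{s} β_j e_{n,k_j}) = Σ_{λ ⊣_q n} multinomial(n; λ) · Σ_{γ ∈ Sym(λ)} exp((2πi/p) · Tr_{F_q/F_p}(Σ_{j=1}^{s} β_j Λ_{α_1,...,α_{q−1}}(k_j, γ*))), where the outer sum runs over all partitions λ of n with at most q parts (padded with zeros to a list of length q), Sym(λ) is the set of all distinct rearrangements of the list λ, and γ* is the list obtained from γ by removing its first element. -/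
/-!
By Vieta, `e_{n,k}(x)` is the coefficient of `X^k` in `∏ t, (1 + x_t X)`. Collecting equal
factors, this product is `∏ i, (1 + α_i X) ^ m_i`, where `m_i` counts the coordinates of `x`
equal to `α_i` (zero coordinates contribute `1`), and `Λ_{α_1,…,α_{q-1}}(k, m)` is the
coefficient of `X^k` in the latter product. So the summand depends on `x` only through its
multiplicity vector `(m_0, …, m_{q-1})`, a composition of `n` attained by exactly
`multinomial(n; m)` tuples `x`. Grouping compositions by their decreasing rearrangement `λ`
gives the right-hand side, the compositions with rearrangement `λ` being exactly the distinct
rearrangements of `λ`.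
-/

noncomputable section

/-- Evaluation of the elementary symmetric polynomial in `n` variables of degree `k`. -/
def esymmVal {R : Type*} [CommRing R] (n k : ℕ) (x : Fin n → R) : R :=
  ∑ s ∈ Finset.powersetCard k Finset.univ, ∏ i ∈ s, x i

/-- `Lam l a m k` is the quantity `Λ_{a_1,…,a_l}(k, m_1,…,m_l)`. -/
def Lam {R : Type*} [CommRing R] : (l : ℕ) → (Fin l → R) → (Fin l → ℕ) → ℤ → R
  | 0, _, _, k => if k = 0 then 1 else 0
  | l + 1, a, m, k =>
      ∑ j ∈ Finset.range (m (Fin.last l) + 1),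
        (Nat.choose (m (Fin.last l)) j : R) * a (Fin.last l) ^ j *
          Lam l (fun i => a i.castSucc) (fun i => m i.castSucc) (k - j)

open Finset Polynomial

theorem esymmVal_eq_coeff_prod {R : Type*} [CommRing R] (n k : ℕ) (x : Fin n → R) :
    esymmVal n k x = (∏ i, (1 + C (x i) * X)).coeff k := by
  have hprod (t : Finset (Fin n)) : ∏ i ∈ t, C (x i) * X = C (∏ i ∈ t, x i) * X ^ #t := by
    rw [prod_mul_distrib, map_prod, prod_const]
  simp_rw [add_comm (1 : R[X]), prod_add, prod_const_one, mul_one, hprod, finsetSum_coeff,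
    coeff_C_mul_X_pow, esymmVal, powersetCard_eq_filter, sum_filter, eq_comm (a := k)]

theorem lam_eq_coeff_prod {R : Type*} [CommRing R] (l : ℕ) (a : Fin l → R) (m : Fin l → ℕ)
    (k : ℤ) : Lam l a m k = if 0 ≤ k then (∏ i, (1 + C (a i) * X) ^ m i).coeff k.toNat else 0 := by
  induction l generalizing k with
  | zero =>
    simp only [Lam, univ_eq_empty, prod_empty, coeff_one]
    split_ifs <;> first | rfl | omega
  | succ l ih =>
    have hbinom : (1 + C (a (Fin.last l)) * X) ^ m (Fin.last l) =
        ∑ j ∈ range (m (Fin.last l) + 1),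
          C ((m (Fin.last l)).choose j * a (Fin.last l) ^ j : R) * X ^ j := by
      rw [add_comm, add_pow]
      refine sum_congr rfl fun j _ => ?_
      simp only [one_pow, mul_one, mul_pow, ← C_pow, map_mul, map_natCast]
      ring
    rw [Lam, Fin.prod_univ_castSucc, hbinom, mul_sum]
    simp only [ih]
    split_ifs with hk
    · rw [finsetSum_coeff]
      refine sum_congr rfl fun j _ => ?_
      rw [← mul_assoc, mul_comm _ (C _), coeff_mul_X_pow', coeff_C_mul]
      by_cases hjk : (j : ℤ) ≤ k
      · rw [if_pos (by omega), if_pos (by omega), show (k - j).toNat = k.toNat - j by omega]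
      · rw [if_neg (by omega), if_neg (by omega), mul_zero]
    · exact sum_eq_zero fun j _ => by rw [if_neg (by omega), mul_zero]

theorem prod_one_add_C_mul_X_comp {R : Type*} [CommRing R] {l n : ℕ} (a : Fin (l + 1) → R)
    (ha : a 0 = 0) (y : Fin n → Fin (l + 1)) :
    ∏ t, (1 + C (a (y t)) * X) = ∏ i : Fin l, (1 + C (a i.succ) * X) ^ #{t | y t = i.succ} := by
  rw [← prod_fiberwise' univ y (fun j => 1 + C (a j) * X), Fin.prod_univ_succ]
  simp [ha]

theorem esymmVal_comp_eq_lam {R : Type*} [CommRing R] {l : ℕ} (a : Fin (l + 1) → R)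
    (ha : a 0 = 0) (n k : ℕ) (y : Fin n → Fin (l + 1)) :
    esymmVal n k (fun t => a (y t)) =
      Lam l (fun i => a i.succ) (fun i => #{t | y t = i.succ}) k := by
  rw [esymmVal_eq_coeff_prod, lam_eq_coeff_prod, if_pos k.cast_nonneg, Int.toNat_natCast]
  exact congrArg (coeff · k) (prod_one_add_C_mul_X_comp a ha y)

section Counting

variable {ι κ : Type*} [Fintype ι] [DecidableEq κ]

theorem exists_perm_comp_eq_of_card_fiber_eq {x y : ι → κ}
    (h : ∀ j, #{i | x i = j} = #{i | y i = j}) : ∃ σ : Equiv.Perm ι, y ∘ σ = x := by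
  let fibers := Equiv.sigmaCongrRight fun j => Fintype.equivOfCardEq
    (α := {i // x i = j}) (β := {i // y i = j}) (by simpa only [Fintype.card_subtype] using h j)
  refine ⟨(Equiv.sigmaFiberEquiv x).symm.trans (fibers.trans (Equiv.sigmaFiberEquiv y)),
    funext fun i => ?_⟩
  exact (fibers ((Equiv.sigmaFiberEquiv x).symm i)).2.2

variable [DecidableEq ι]

theorem card_filter_comp_perm_eq (x : ι → κ) (τ : Equiv.Perm ι) :
    #{σ : Equiv.Perm ι | x ∘ σ = x ∘ τ} = #{σ : Equiv.Perm ι | x ∘ σ = x} := by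
  refine card_equiv (Equiv.mulRight τ⁻¹) fun σ => ?_
  simp only [mem_filter, mem_univ, true_and, Equiv.coe_mulRight, Equiv.Perm.coe_mul,
    Equiv.Perm.inv_def, ← Function.comp_assoc, Equiv.comp_symm_eq]

variable [Fintype κ]

theorem card_filter_card_fiber_eq_multinomial (m : κ → ℕ) (hm : ∑ j, m j = Fintype.card ι) :
    #{x : ι → κ | ∀ j, #{i | x i = j} = m j} = Nat.multinomial univ m := by
  -- Orbit–stabilizer: `σ ↦ x₀ ∘ σ` maps `Perm ι` onto `S`, with fibres of size `∏ j, (m j)!`.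
  let e₀ : ι ≃ Σ j, Fin (m j) := Fintype.equivOfCardEq (by simp [hm])
  let x₀ : ι → κ := fun i => (e₀ i).1
  set S : Finset (ι → κ) := {x | ∀ j, #{i | x i = j} = m j}
  have hx₀ (j : κ) : #{i | x₀ i = j} = m j := by
    rw [← Fintype.card_subtype, Fintype.card_congr ((e₀.subtypeEquiv fun i => Iff.rfl).trans
      (Equiv.sigmaSubtype j)), Fintype.card_fin]
  have hstab : #{σ : Equiv.Perm ι | x₀ ∘ σ = x₀} = ∏ j, (m j).factorial := by
    rw [← Fintype.card_subtype, DomMulAct.stabilizer_card]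
    simp only [Fintype.card_subtype, hx₀]
  have hfiber (x) (hx : x ∈ S) : #{σ : Equiv.Perm ι | x₀ ∘ σ = x} = ∏ j, (m j).factorial := by
    obtain ⟨τ, rfl⟩ := exists_perm_comp_eq_of_card_fiber_eq fun j =>
      ((mem_filter.1 hx).2 j).trans (hx₀ j).symm
    rw [card_filter_comp_perm_eq, hstab]
  have hmaps (σ : Equiv.Perm ι) (_ : σ ∈ univ) : x₀ ∘ σ ∈ S := by
    refine mem_filter.2 ⟨mem_univ _, fun j => ?_⟩
    rw [← hx₀ j, ← Fintype.card_subtype, ← Fintype.card_subtype]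
    exact Fintype.card_congr (σ.subtypeEquiv fun i => Iff.rfl)
  have hcount := card_eq_sum_card_fiberwise hmaps
  rw [sum_congr rfl hfiber, sum_const, smul_eq_mul, card_univ, Fintype.card_perm, ← hm,
    ← Nat.multinomial_spec, mul_comm] at hcount
  exact (Nat.eq_of_mul_eq_mul_right (prod_pos fun j _ => (m j).factorial_pos) hcount).symm

theorem sum_card_fiber_eq_sum_multinomial_smul {M : Type*} [AddCommMonoid M] (n : ℕ)
    (F : (κ → ℕ) → M) :
    ∑ y : Fin n → κ, F (fun j => #{i | y i = j}) =
      ∑ c ∈ piAntidiag univ n, Nat.multinomial univ c • F c := by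
  have hmaps (y : Fin n → κ) (_ : y ∈ univ) : (fun j => #{i | y i = j}) ∈ piAntidiag univ n := by
    simpa using (card_eq_sum_card_fiberwise (s := univ) (t := univ) fun i _ => mem_univ (y i)).symm
  rw [← sum_fiberwise_of_maps_to hmaps]
  refine sum_congr rfl fun c hc => ?_
  rw [sum_congr rfl fun y hy => by rw [(mem_filter.1 hy).2], sum_const,
    ← card_filter_card_fiber_eq_multinomial (ι := Fin n) c (by simpa using hc)]
  simp only [funext_iff]

end Counting

def partitionTuples (q n : ℕ) : Finset (Fin q → ℕ) :=
  (Fintype.piFinset fun _ : Fin q => Finset.range (n + 1)).filter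
    (fun lam => (∀ i j : Fin q, i ≤ j → lam j ≤ lam i) ∧ ∑ i, lam i = n)

section Rearrangement

variable {q n : ℕ}

theorem mem_partitionTuples {lam : Fin q → ℕ} :
    lam ∈ partitionTuples q n ↔ Antitone lam ∧ lam ∈ piAntidiag (univ : Finset (Fin q)) n := by
  simp only [partitionTuples, mem_filter, Fintype.mem_piFinset, mem_range, mem_piAntidiag,
    mem_univ, implies_true, and_true, Nat.lt_succ_iff]
  refine ⟨fun h => ⟨fun i j => h.2.1 i j, h.2.2⟩, fun h => ⟨fun i => ?_, fun i j => @h.1 i j, h.2⟩⟩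
  exact h.2 ▸ single_le_sum (fun j _ => Nat.zero_le _) (mem_univ i)

theorem eq_of_antitone_of_perm_ofFn {lam mu : Fin q → ℕ} (hlam : Antitone lam)
    (hmu : Antitone mu) (h : (List.ofFn lam).Perm (List.ofFn mu)) : lam = mu :=
  List.ofFn_injective <| h.eq_of_pairwise' hlam.sortedGE_ofFn.pairwise hmu.sortedGE_ofFn.pairwise

theorem exists_antitone_perm_ofFn (c : Fin q → ℕ) :
    ∃ lam : Fin q → ℕ, Antitone lam ∧ (List.ofFn c).Perm (List.ofFn lam) :=
  ⟨c ∘ Tuple.sort (OrderDual.toDual ∘ c), monotone_toDual_comp_iff.1 (Tuple.monotone_sort _),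
    ((Tuple.sort _).ofFn_comp_perm c).symm⟩

theorem multinomial_eq_of_perm_ofFn {c d : Fin q → ℕ} (h : (List.ofFn c).Perm (List.ofFn d)) :
    Nat.multinomial univ c = Nat.multinomial univ d := by
  rw [Nat.multinomial, Nat.multinomial, ← List.sum_ofFn, ← List.sum_ofFn, h.sum_eq]
  congr 1
  simpa [List.map_ofFn, List.prod_ofFn, Function.comp_def] using (h.map Nat.factorial).prod_eq

theorem mem_piAntidiag_of_perm_ofFn {c d : Fin q → ℕ} (h : (List.ofFn c).Perm (List.ofFn d))
    (hd : d ∈ piAntidiag (univ : Finset (Fin q)) n) :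
    c ∈ piAntidiag (univ : Finset (Fin q)) n := by
  simpa [← List.sum_ofFn, h.sum_eq] using hd

theorem toFinset_permutations_ofFn {lam : Fin q → ℕ}
    (hlam : lam ∈ piAntidiag (univ : Finset (Fin q)) n) :
    (List.ofFn lam).permutations.toFinset =
      {c ∈ piAntidiag (univ : Finset (Fin q)) n | (List.ofFn c).Perm (List.ofFn lam)}.image
        List.ofFn := by
  ext γ
  simp only [List.mem_toFinset, List.mem_permutations, mem_image, mem_filter]
  refine ⟨fun h => ?_, fun ⟨c, ⟨_, hc⟩, hcγ⟩ => hcγ ▸ hc⟩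
  obtain rfl : γ.length = q := by simpa using h.length_eq
  refine ⟨fun i => γ[(i : ℕ)], ?_, List.ofFn_getElem⟩
  rw [List.ofFn_getElem]
  exact ⟨mem_piAntidiag_of_perm_ofFn (by rwa [List.ofFn_getElem]) hlam, h⟩

theorem sum_partitionTuples_smul_sum_permutations {M : Type*} [AddCommMonoid M]
    (f : List ℕ → M) :
    ∑ lam ∈ partitionTuples q n,
        Nat.multinomial univ lam • ∑ γ ∈ (List.ofFn lam).permutations.toFinset, f γ =
      ∑ c ∈ piAntidiag (univ : Finset (Fin q)) n, Nat.multinomial univ c • f (List.ofFn c) := by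
  set C := piAntidiag (univ : Finset (Fin q)) n
  let rearrangements (lam : Fin q → ℕ) := {c ∈ C | (List.ofFn c).Perm (List.ofFn lam)}
  have hcover : C = (partitionTuples q n).biUnion rearrangements := by
    ext c
    simp only [rearrangements, mem_biUnion, mem_filter, mem_partitionTuples]
    refine ⟨fun hc => ?_, fun ⟨_, _, hc, _⟩ => hc⟩
    obtain ⟨lam, hlam, hperm⟩ := exists_antitone_perm_ofFn c
    exact ⟨lam, ⟨hlam, mem_piAntidiag_of_perm_ofFn hperm.symm hc⟩, hc, hperm⟩
  have hdisj : (partitionTuples q n : Set (Fin q → ℕ)).PairwiseDisjoint rearrangements := by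
    intro lam hlam mu hmu hne
    refine disjoint_left.2 fun c hc₁ hc₂ => hne ?_
    exact eq_of_antitone_of_perm_ofFn (mem_partitionTuples.1 hlam).1 (mem_partitionTuples.1 hmu).1
      ((mem_filter.1 hc₁).2.symm.trans (mem_filter.1 hc₂).2)
  rw [hcover, sum_biUnion hdisj]
  refine sum_congr rfl fun lam hlam => ?_
  rw [toFinset_permutations_ofFn (mem_partitionTuples.1 hlam).2,
    sum_image fun c _ d _ h => List.ofFn_injective h, smul_sum]
  exact sum_congr rfl fun c hc => by rw [multinomial_eq_of_perm_ofFn (mem_filter.1 hc).2]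

end Rearrangement

theorem getD_tail_ofFn {l : ℕ} (c : Fin (l + 1) → ℕ) (i : Fin l) :
    (List.ofFn c).tail.getD i 0 = c i.succ := by
  simp [List.ofFn_succ]

theorem sum_esymmVal_eq_sum_partitionTuples {R M : Type*} [CommRing R] [Fintype R]
    [AddCommMonoid M] {l : ℕ} (E : Fin (l + 1) ≃ R) (hE : E 0 = 0) (n : ℕ) (G : (ℕ → R) → M) :
    ∑ x : Fin n → R, G (fun k => esymmVal n k x) =
      ∑ lam ∈ partitionTuples (l + 1) n, Nat.multinomial univ lam •
        ∑ γ ∈ (List.ofFn lam).permutations.toFinset,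
          G (fun k => Lam l (fun i => E i.succ) (fun i => γ.tail.getD i 0) k) := by
  rw [sum_partitionTuples_smul_sum_permutations,
    ← Fintype.sum_equiv (Equiv.piCongrRight fun _ => E)
      (fun y => G fun k => esymmVal n k fun t => E (y t)) _ fun _ => rfl]
  simp_rw [esymmVal_comp_eq_lam E hE, getD_tail_ofFn]
  exact sum_card_fiber_eq_sum_multinomial_smul n
    fun c => G fun k => Lam l (fun i => E i.succ) (fun i => c i.succ) k

/-- Partitions `λ ⊣_q n` are encoded as weakly decreasing tuples of length `q`, `Sym(λ)` as the
distinct permutations of the list of entries of `λ`, and `γ*` as `γ.tail`. -/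
theorem stmt5_general (p : ℕ) (r : ℕ) (n : ℕ)
    (s : ℕ) (k : Fin s → ℕ)
    (K : Type*) [Field K] [Fintype K] [Algebra (ZMod p) K]
    (hcard : Fintype.card K = p ^ r)
    (β : Fin s → K)
    (α : Fin (p ^ r - 1) → K)
    (hinj : Function.Injective α) (h0 : ∀ i, α i ≠ 0) :
    (∑ x : Fin n → K,
        Complex.exp (2 * (Real.pi : ℂ) * Complex.I / p *
          ((Algebra.trace (ZMod p) K (∑ j, β j * esymmVal n (k j) x)).val : ℂ)))
      = ∑ lam ∈ (Fintype.piFinset fun _ : Fin (p ^ r) => Finset.range (n + 1)).filter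
            (fun lam => (∀ i j : Fin (p ^ r), i ≤ j → lam j ≤ lam i) ∧ ∑ i, lam i = n),
          (Nat.multinomial Finset.univ lam : ℂ) *
            ∑ γ ∈ (List.ofFn lam).permutations.toFinset,
              Complex.exp (2 * (Real.pi : ℂ) * Complex.I / p *
                ((Algebra.trace (ZMod p) K
                    (∑ j, β j *
                      Lam (p ^ r - 1) α (fun i => γ.tail.getD (i : ℕ) 0) (k j : ℤ))).val : ℂ)) := by
  generalize p ^ r = q at *
  obtain ⟨l, rfl⟩ : ∃ l, q = l + 1 := ⟨q - 1, by have := Fintype.card_pos (α := K); omega⟩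
  -- Index `0` stands for `0 ∈ K`, whose multiplicity is the entry that `γ.tail` drops.
  have hbij : Function.Bijective (Fin.cons 0 α : Fin (l + 1) → K) :=
    (Fintype.bijective_iff_injective_and_card _).2
      ⟨Fin.cons_injective_iff.2 ⟨fun ⟨i, hi⟩ => h0 i hi, hinj⟩, by simp [hcard]⟩
  simp only [← nsmul_eq_mul]
  exact sum_esymmVal_eq_sum_partitionTuples (Equiv.ofBijective _ hbij) rfl n fun e =>
    Complex.exp (2 * (Real.pi : ℂ) * Complex.I / p *
      ((Algebra.trace (ZMod p) K (∑ j, β j * e (k j))).val : ℂ))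

/-- The exponential sum of `∑_j β_j e_{n,k_j}` over `F_q`, `q = p^r`, as a sum over
partitions `λ ⊣_q n` (weakly decreasing tuples of length `q` summing to `n`), where
`Sym(λ)` is the set of distinct rearrangements of `λ` (as a list) and `γ*` drops the first
entry of `γ`. -/
theorem stmt5 (p : ℕ) [Fact p.Prime] (r : ℕ) (hr : 0 < r) (n : ℕ) (hn : 0 < n)
    (s : ℕ) (hs : 0 < s) (k : Fin s → ℕ) (hk1 : ∀ j, 1 ≤ k j) (hmono : StrictMono k)
    (K : Type*) [Field K] [Fintype K] [Algebra (ZMod p) K]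
    (hcard : Fintype.card K = p ^ r)
    (β : Fin s → K) (hβ : ∀ j, β j ≠ 0)
    (α : Fin (p ^ r - 1) → K)
    (hinj : Function.Injective α) (h0 : ∀ i, α i ≠ 0) :
    (∑ x : Fin n → K,
        Complex.exp (2 * (Real.pi : ℂ) * Complex.I / p *
          ((Algebra.trace (ZMod p) K (∑ j, β j * esymmVal n (k j) x)).val : ℂ)))
      = ∑ lam ∈ (Fintype.piFinset fun _ : Fin (p ^ r) => Finset.range (n + 1)).filter
            (fun lam => (∀ i j : Fin (p ^ r), i ≤ j → lam j ≤ lam i) ∧ ∑ i, lam i = n),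
          (Nat.multinomial Finset.univ lam : ℂ) *
            ∑ γ ∈ (List.ofFn lam).permutations.toFinset,
              Complex.exp (2 * (Real.pi : ℂ) * Complex.I / p *
                ((Algebra.trace (ZMod p) K
                    (∑ j, β j *
                      Lam (p ^ r - 1) α (fun i => γ.tail.getD (i : ℕ) 0) (k j : ℤ))).val : ℂ)) :=
  stmt5_general p r n s k K hcard β α hinj h0
end
end

section
/- Let p be prime, k a positive integer, and a_1, ..., a_l elements of a field extension of F_p. Set D = p^{⌊log_p(k)⌋+1}. Define Λ^{(p)}_{a_1,...,a_l}(k, m_1, ..., m_l) = Λ_{a_1,...,a_l}(k, m_1^+, ..., m_l^+) mod p, where m^+ = m if m > 0 and m^+ = m + (⌊−m/D⌋ + 1)·D if m ≤ 0. Then Λ^{(p)}_{a_1,...,a_l}(k, m_1, ..., m_l) is periodic in each of the variables m_1, ..., m_l with period D; that is, Λ^{(p)}_{a_1,...,a_l}(k, m_1, ..., m_j + D, ..., m_l) = Λ^{(p)}_{a_1,...,a_l}(k, m_1, ..., m_j, ..., m_l) for each j = 1, ..., l and all integers m_1, ..., m_l. -/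
/-!
In characteristic `p`, `(X + 1) ^ (m + p ^ s) = (X + 1) ^ m * (X ^ p ^ s + 1)`, so the binomial
coefficients `C(m, j)` with `j < p ^ s` depend only on `m mod p ^ s`. Since `Λ(k, m)` only
involves `C(m_i, j)` with `j ≤ k < p ^ s = D`, it depends only on the residues of the `m_i`
modulo `D`, and `m ↦ m⁺` preserves residues modulo `D`.
-/

noncomputable section

/-- `m⁺ = m` if `m > 0` and `m⁺ = m + (⌊-m/D⌋ + 1)·D` if `m ≤ 0`. -/
def mplus (D : ℕ) (m : ℤ) : ℤ := if 0 < m then m else m + ((-m) / (D : ℤ) + 1) * D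

open Polynomial

section Choose

variable {R : Type*} [CommRing R] {p : ℕ} [Fact p.Prime] [CharP R p]

theorem Nat.cast_choose_add_prime_pow (m s : ℕ) {j : ℕ} (hj : j < p ^ s) :
    (((m + p ^ s).choose j : ℕ) : R) = (m.choose j : R) := by
  have h : ((X : R[X]) + 1) ^ (m + p ^ s) = (X + 1) ^ m * X ^ p ^ s + (X + 1) ^ m := by
    rw [pow_add, add_pow_char_pow, one_pow]
    ring
  simpa [coeff_X_add_one_pow, coeff_mul_X_pow', not_le.2 hj] using congrArg (coeff · j) h

theorem Nat.cast_choose_congr_of_modEq {s j m m' : ℕ} (hj : j < p ^ s)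
    (hm : m ≡ m' [MOD p ^ s]) : (m.choose j : R) = (m'.choose j : R) := by
  have hper : Function.Periodic (fun n : ℕ => (n.choose j : R)) (p ^ s) :=
    fun n => Nat.cast_choose_add_prime_pow n s hj
  rw [← hper.map_mod_nat m, ← hper.map_mod_nat m', show m % p ^ s = m' % p ^ s from hm]

end Choose

section Lam

variable {R : Type*} [CommRing R]

theorem Lam_of_neg : ∀ (l : ℕ) (a : Fin l → R) (m : Fin l → ℕ) {k : ℤ}, k < 0 →
    Lam l a m k = 0
  | 0, _, _, k, hk => by simp [Lam, hk.ne]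
  | l + 1, _, _, _, hk => Finset.sum_eq_zero fun j _ => by
      rw [Lam_of_neg l _ _ (by omega), mul_zero]

theorem Lam_succ_eq_sum_range {l N : ℕ} (a : Fin (l + 1) → R) (m : Fin (l + 1) → ℕ) (k : ℤ)
    (hN : m (Fin.last l) ≤ N) :
    Lam (l + 1) a m k = ∑ j ∈ Finset.range (N + 1),
      (Nat.choose (m (Fin.last l)) j : R) * a (Fin.last l) ^ j *
        Lam l (fun i => a i.castSucc) (fun i => m i.castSucc) (k - j) := by
  rw [Lam]
  refine Finset.sum_subset (Finset.range_subset_range.2 (by omega)) fun j _ hj => ?_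
  rw [Finset.mem_range, not_lt] at hj
  rw [Nat.choose_eq_zero_of_lt (by omega), Nat.cast_zero, zero_mul, zero_mul]

theorem Lam_congr_of_modEq {p : ℕ} [Fact p.Prime] [CharP R p] (s : ℕ) :
    ∀ (l : ℕ) (a : Fin l → R) {m m' : Fin l → ℕ}, (∀ i, m i ≡ m' i [MOD p ^ s]) →
      ∀ {k : ℤ}, k < (p : ℤ) ^ s → Lam l a m k = Lam l a m' k
  | 0, _, _, _, _, _, _ => rfl
  | l + 1, a, m, m', hm, k, hk => by
    set N := max (m (Fin.last l)) (m' (Fin.last l))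
    rw [Lam_succ_eq_sum_range a m k (le_max_left _ _ : _ ≤ N),
      Lam_succ_eq_sum_range a m' k (le_max_right _ _ : _ ≤ N)]
    refine Finset.sum_congr rfl fun j _ => ?_
    by_cases hkj : k - j < 0
    · rw [Lam_of_neg _ _ _ hkj, Lam_of_neg _ _ _ hkj, mul_zero, mul_zero]
    · have hj : j < p ^ s := by exact_mod_cast (show (j : ℤ) < (p : ℤ) ^ s by omega)
      rw [Nat.cast_choose_congr_of_modEq hj (hm (Fin.last l)),
        Lam_congr_of_modEq s l _ (fun i => hm i.castSucc) (by omega)]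

end Lam

section MPlus

variable {D : ℕ}

theorem mplus_nonneg (hD : 0 < D) (x : ℤ) : 0 ≤ mplus D x := by
  unfold mplus
  split_ifs
  · omega
  · have := Int.lt_ediv_add_one_mul_self (-x) (Int.natCast_pos.2 hD)
    omega

theorem mplus_modEq (x : ℤ) : mplus D x ≡ x [ZMOD D] := by
  unfold mplus
  split_ifs
  · rfl
  · exact Int.add_mul_emod_self_right _ _ _

theorem toNat_mplus_modEq (hD : 0 < D) {x y : ℤ} (h : x ≡ y [ZMOD D]) :
    (mplus D x).toNat ≡ (mplus D y).toNat [MOD D] := by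
  rw [← Int.natCast_modEq_iff, Int.toNat_of_nonneg (mplus_nonneg hD x),
    Int.toNat_of_nonneg (mplus_nonneg hD y)]
  exact (mplus_modEq x).trans (h.trans (mplus_modEq y).symm)

end MPlus

theorem stmt12_general (p : ℕ) [Fact p.Prime] (K : Type*) [Field K] [CharP K p]
    (l : ℕ) (a : Fin l → K) (k : ℕ)
    (D : ℕ) (hD : D = p ^ (Nat.log p k + 1))
    (m : Fin l → ℤ) (j : Fin l) :
    Lam l a (fun i => (mplus D (Function.update m j (m j + D) i)).toNat) (k : ℤ)
      = Lam l a (fun i => (mplus D (m i)).toNat) (k : ℤ) := by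
  have hp : p.Prime := Fact.out
  have hkD : (k : ℤ) < (p : ℤ) ^ (Nat.log p k + 1) := by
    exact_mod_cast Nat.lt_pow_succ_log_self hp.one_lt k
  have hD0 : 0 < D := hD ▸ pow_pos hp.pos _
  have hshift : ∀ i, Function.update m j (m j + D) i ≡ m i [ZMOD D] := by
    intro i
    rcases eq_or_ne i j with rfl | hij
    · simp [Int.ModEq]
    · rw [Function.update_of_ne hij]
  refine Lam_congr_of_modEq _ l a (fun i => ?_) hkD
  rw [← hD]
  exact toNat_mplus_modEq hD0 (hshift i)

/-- Periodicity of `Λ^{(p)}`: in a field extension of `F_p`, the function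
`Λ^{(p)}_{a_1,…,a_l}(k, m_1, …, m_l) = Λ_{a_1,…,a_l}(k, m_1⁺, …, m_l⁺)` is periodic in each of
the variables `m_1, …, m_l` with period `D = p^{⌊log_p k⌋ + 1}` (in characteristic `p`,
reduction mod `p` is automatic). -/
theorem stmt12 (p : ℕ) [Fact p.Prime] (K : Type*) [Field K] [CharP K p]
    (l : ℕ) (a : Fin l → K) (k : ℕ) (hk : 0 < k)
    (D : ℕ) (hD : D = p ^ (Nat.log p k + 1))
    (m : Fin l → ℤ) (j : Fin l) :
    Lam l a (fun i => (mplus D (Function.update m j (m j + D) i)).toNat) (k : ℤ)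
      = Lam l a (fun i => (mplus D (m i)).toNat) (k : ℤ) :=
  stmt12_general p K l a k D hD m j
end
end
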